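/- For every n ≥ 1, ∑_{k=1}^{n} (−1)^k·(1/(k+1))·∑_{(n_1,…,n_k): n_i≥1, ∑n_i=n} 1/(n_1!⋯n_k!) = ∑_{k=1}^{n} (−1)^k·∑_{(n_1,…,n_k): n_i≥1, ∑n_i=n} 1/((n_1+1)!⋯(n_k+1)!). -/

import Mathlib

/-!
Put `f = eˣ - 1 = x·u` with `u = (eˣ - 1)/x`. The inner sums are `[xⁿ] fᵏ` and `[xⁿ] (u - 1)ᵏ`,
so the left side is `[xⁿ] P` for `P = ∑_{k ≤ n} (-1)ᵏ fᵏ/(k+1)` and the right side is `[xⁿ] Q`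
for the truncated geometric series `Q = ∑_{k ≤ n} (1 - u)ᵏ`, which satisfies `u·Q ≡ 1 mod xⁿ⁺¹`.
The product `f·P` truncates `log(1 + f) = x`: its derivative is `(1 + f)·∑_{k ≤ n} (-f)ᵏ ≡ 1`
modulo `xⁿ⁺¹`, so `x·u·P ≡ x mod xⁿ⁺²`, i.e. also `u·P ≡ 1 mod xⁿ⁺¹`. Since `u` is a unit,
`P` and `Q` agree up to degree `n` (both truncate `x/(eˣ - 1)`).
-/

open PowerSeries Finset

namespace PowerSeries

section CommSemiring
variable {R : Type*} [CommSemiring R]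

theorem coeff_pow_eq_sum_antidiagonalTuple (φ : R⟦X⟧) (k n : ℕ) :
    coeff n (φ ^ k) = ∑ c ∈ Nat.antidiagonalTuple k n, ∏ i, coeff (c i) φ := by
  rw [← Fin.prod_const, coeff_prod, finsuppAntidiag, sum_map,
    ← piAntidiag_univ_fin_eq_antidiagonalTuple, ← sum_attach (piAntidiag univ n)]
  rfl

theorem coeff_pow_eq_sum_compositions {φ : R⟦X⟧} (hφ : constantCoeff φ = 0) (k n : ℕ) :
    coeff n (φ ^ k) = ∑ c ∈ (Nat.antidiagonalTuple k n).filter (fun c => ∀ i, 1 ≤ c i),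
      ∏ i, coeff (c i) φ := by
  rw [coeff_pow_eq_sum_antidiagonalTuple, sum_filter_of_ne]
  intro c _ hc i
  by_contra! h
  exact hc (prod_eq_zero (mem_univ i) (by simp [Nat.lt_one_iff.mp h, hφ]))

theorem sum_Icc_mul_coeff_pow (a : ℕ → R) (φ : R⟦X⟧) {n : ℕ} (hn : n ≠ 0) :
    ∑ k ∈ Icc 1 n, a k * coeff n (φ ^ k) = coeff n (∑ k ∈ range (n + 1), C (a k) * φ ^ k) := by
  rw [map_sum, range_eq_Ico, sum_eq_sum_Ico_succ_bot (by omega), zero_add,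
    Ico_add_one_right_eq_Icc]
  simp [coeff_C, hn]

end CommSemiring

section CommRing
variable {R : Type*} [CommRing R]

theorem X_pow_dvd_mul_geom_sum_sub_one {x : R⟦X⟧} (hx : X ∣ x) (n : ℕ) :
    X ^ n ∣ (1 - x) * ∑ k ∈ range n, x ^ k - 1 := by
  rw [mul_neg_geom_sum, sub_sub_cancel_left]
  exact (pow_dvd_pow_of_dvd hx n).neg_right

theorem coeff_eq_of_X_pow_dvd_mul_sub_one {u φ ψ : R⟦X⟧} (hu : IsUnit u) {n : ℕ}
    (hφ : X ^ (n + 1) ∣ u * φ - 1) (hψ : X ^ (n + 1) ∣ u * ψ - 1) : coeff n φ = coeff n ψ := by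
  have h : X ^ (n + 1) ∣ u * (φ - ψ) := by
    simpa [mul_sub] using dvd_sub hφ hψ
  rw [← sub_eq_zero, ← map_sub]
  exact X_pow_dvd_iff.mp (hu.dvd_mul_left.mp h) n n.lt_succ_self

theorem X_pow_succ_dvd_of_X_pow_dvd_derivative [IsAddTorsionFree R] {φ : R⟦X⟧}
    (h0 : constantCoeff φ = 0) {n : ℕ} (hd : X ^ n ∣ d⁄dX R φ) : X ^ (n + 1) ∣ φ := by
  rw [X_pow_dvd_iff] at hd ⊢
  rintro (_ | m) hm
  · simpa using h0
  · have h := hd m (by omega)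
    rw [coeff_derivative, mul_comm, ← Nat.cast_succ, ← nsmul_eq_mul] at h
    exact (nsmul_eq_zero_iff_right m.succ_ne_zero).mp h

end CommRing

theorem derivative_mul_sum_C_mul_pow {K : Type*} [Field K] [CharZero K] (f : K⟦X⟧) (n : ℕ) :
    d⁄dX K (f * ∑ k ∈ range n, C ((-1 : K) ^ k * (1 / (k + 1))) * f ^ k) =
      d⁄dX K f * ∑ k ∈ range n, (-f) ^ k := by
  rw [mul_sum, map_sum, mul_sum]
  refine sum_congr rfl fun k _ => ?_
  have hk : C ((-1 : K) ^ k * (1 / (k + 1))) * ((k + 1 : ℕ) : K⟦X⟧) = (-1) ^ k := by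
    rw [← map_natCast C, ← map_mul,
      show (-1 : K) ^ k * (1 / (k + 1)) * ((k + 1 : ℕ) : K) = (-1) ^ k by push_cast; field_simp]
    simp
  rw [mul_left_comm, ← pow_succ', Derivation.leibniz, derivative_C, smul_zero, add_zero,
    smul_eq_mul, derivative_pow, Nat.add_sub_cancel, neg_pow f]
  linear_combination (f ^ k * d⁄dX K f) * hk

end PowerSeries

open PowerSeries

def expSubOneDivX : ℚ⟦X⟧ := mk fun m => 1 / (m + 1).factorial

theorem X_mul_expSubOneDivX : X * expSubOneDivX = exp ℚ - 1 := by
  ext (_ | m) <;> simp [expSubOneDivX, coeff_succ_X_mul]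

theorem constantCoeff_expSubOneDivX : constantCoeff expSubOneDivX = 1 := by
  simp [expSubOneDivX, ← coeff_zero_eq_constantCoeff_apply]

theorem X_pow_succ_dvd_expSubOne_mul_sum_sub_X (n : ℕ) :
    X ^ (n + 1) ∣
      (exp ℚ - 1) * ∑ k ∈ range n, C ((-1 : ℚ) ^ k * (1 / (k + 1))) * (exp ℚ - 1) ^ k - X := by
  refine X_pow_succ_dvd_of_X_pow_dvd_derivative (by simp) ?_
  rw [map_sub, derivative_mul_sum_C_mul_pow, derivative_X, map_sub, derivative_exp,
    derivative_one, sub_zero]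
  convert X_pow_dvd_mul_geom_sum_sub_one (x := -(exp ℚ - 1)) (X_dvd_iff.mpr (by simp)) n using 3
  ring

theorem X_pow_succ_dvd_expSubOneDivX_mul_sum_expSubOne_pow_sub_one (n : ℕ) :
    X ^ (n + 1) ∣
      expSubOneDivX * ∑ k ∈ range (n + 1), C ((-1 : ℚ) ^ k * (1 / (k + 1))) * (exp ℚ - 1) ^ k
        - 1 := by
  have h := X_pow_succ_dvd_expSubOne_mul_sum_sub_X (n + 1)
  nth_rw 1 [← X_mul_expSubOneDivX] at h
  rw [mul_assoc, ← mul_sub_one, pow_succ'] at h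
  exact (mul_dvd_mul_iff_left X_ne_zero).mp h

theorem X_pow_succ_dvd_expSubOneDivX_mul_sum_expSubOneDivX_sub_one_pow_sub_one (n : ℕ) :
    X ^ (n + 1) ∣
      expSubOneDivX * ∑ k ∈ range (n + 1), C ((-1 : ℚ) ^ k) * (expSubOneDivX - 1) ^ k - 1 := by
  convert X_pow_dvd_mul_geom_sum_sub_one (x := 1 - expSubOneDivX)
    (X_dvd_iff.mpr (by simp [constantCoeff_expSubOneDivX])) (n + 1) using 3
  · ring
  · refine sum_congr rfl fun k _ => ?_
    rw [map_pow, map_neg, map_one, ← mul_pow]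
    ring

theorem coeff_expSubOne_pow (k n : ℕ) :
    coeff n ((exp ℚ - 1) ^ k) =
      ∑ c ∈ (Nat.antidiagonalTuple k n).filter (fun c => ∀ i, 1 ≤ c i),
        ∏ i, (1 : ℚ) / ((c i).factorial : ℚ) := by
  rw [coeff_pow_eq_sum_compositions (by simp)]
  refine sum_congr rfl fun c hc => prod_congr rfl fun i _ => ?_
  have := (mem_filter.mp hc).2 i
  simp [coeff_one, show c i ≠ 0 by omega]

theorem coeff_expSubOneDivX_sub_one_pow (k n : ℕ) :
    coeff n ((expSubOneDivX - 1) ^ k) =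
      ∑ c ∈ (Nat.antidiagonalTuple k n).filter (fun c => ∀ i, 1 ≤ c i),
        ∏ i, (1 : ℚ) / ((c i + 1).factorial : ℚ) := by
  rw [coeff_pow_eq_sum_compositions (by simp [constantCoeff_expSubOneDivX])]
  refine sum_congr rfl fun c hc => prod_congr rfl fun i _ => ?_
  have := (mem_filter.mp hc).2 i
  simp [expSubOneDivX, coeff_one, show c i ≠ 0 by omega]

/-- For `n ≥ 1`,
`∑_{k=1}^n (-1)^k/(k+1) ∑_{compositions} ∏ 1/n_i! = ∑_{k=1}^n (-1)^k ∑_{compositions} ∏ 1/(n_i+1)!`. -/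
theorem stmt_5 (n : ℕ) (hn : 1 ≤ n) :
    (∑ k ∈ Finset.Icc 1 n, (-1 : ℚ) ^ k * (1 / (k + 1)) *
      ∑ c ∈ (Finset.Nat.antidiagonalTuple k n).filter (fun c => ∀ i, 1 ≤ c i),
        ∏ i, (1 : ℚ) / ((c i).factorial : ℚ))
    = ∑ k ∈ Finset.Icc 1 n, (-1 : ℚ) ^ k *
      ∑ c ∈ (Finset.Nat.antidiagonalTuple k n).filter (fun c => ∀ i, 1 ≤ c i),
        ∏ i, (1 : ℚ) / ((c i + 1).factorial : ℚ) := by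
  simp only [← coeff_expSubOne_pow, ← coeff_expSubOneDivX_sub_one_pow]
  rw [sum_Icc_mul_coeff_pow _ _ (by omega), sum_Icc_mul_coeff_pow _ _ (by omega)]
  exact coeff_eq_of_X_pow_dvd_mul_sub_one
    (isUnit_iff_constantCoeff.mpr (by simp [constantCoeff_expSubOneDivX]))
    (X_pow_succ_dvd_expSubOneDivX_mul_sum_expSubOne_pow_sub_one n)
    (X_pow_succ_dvd_expSubOneDivX_mul_sum_expSubOneDivX_sub_one_pow_sub_one n)
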